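/- arXiv:0804.2305 — 3 statements merged into one kernel-verified Lean document; each statement's English description precedes it below -/
import Mathlib

section
/- In the affine Coxeter group W of type Ã₂, generated by s₁, s₂, s₃ subject to sᵢ² = 1 and (sᵢsⱼ)³ = 1 for i ≠ j, the element w = (s₂s₁s₃)^m has Coxeter length ℓ(w) = 3m for every m ≥ 0, and consequently ℓ(w²) = 2ℓ(w). -/
/-!
Realise `W` as the affine Weyl group acting on the plane of the root system A₂, and follow the
barycenter `x` of the fundamental alcove. Every simple reflection moves `x` by a root, and the
linear parts of the action permute the six roots; hence, along a word, each letter changes the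
coordinate of `w x - x` along the glide axis of `c = s₁ s₀ s₂` by at most 3 (in suitable units).
The glide reflection `c` moves every point by 9 along its axis, so `ℓ(cᵐ) ≥ 9m / 3 = 3m`, while
`ℓ(cᵐ) ≤ 3m` is clear.
-/

/-- The Coxeter matrix of affine type Ã₂: three generators, all pairwise orders 3. -/
def AffineA2 : CoxeterMatrix (Fin 3) where
  M := Matrix.of fun i j => if i = j then 1 else 3
  isSymm := by
    ext i j
    by_cases h : i = j <;> simp [Matrix.of_apply, h, eq_comm, Matrix.transpose]
  diagonal i := by simp [Matrix.of_apply]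
  off_diagonal i j h := by simp [Matrix.of_apply, h]

namespace CoxeterSystem

variable {B W : Type*} [Group W] {M : CoxeterMatrix B} (cs : CoxeterSystem M W)

theorem length_pow_le (w : W) (k : ℕ) : cs.length (w ^ k) ≤ k * cs.length w := by
  induction k with
  | zero => simp
  | succ k ih =>
    calc cs.length (w ^ (k + 1)) ≤ cs.length (w ^ k) + cs.length w := by
          rw [pow_succ]; exact cs.length_mul_le _ _
      _ ≤ (k + 1) * cs.length w := by rw [add_mul, one_mul]; gcongr

theorem abs_le_mul_length {g : W → ℤ} {b : ℤ} (h_one : g 1 = 0)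
    (h_simple : ∀ w i, |g (w * cs.simple i) - g w| ≤ b) (w : W) :
    |g w| ≤ b * cs.length w := by
  obtain ⟨ω, hω, rfl⟩ := cs.exists_isReduced w
  rw [hω.eq]
  clear hω
  induction ω using List.reverseRecOn with
  | nil => simp [h_one]
  | append_singleton ω i ih =>
    rw [cs.wordProd_append, wordProd_singleton, List.length_append, List.length_singleton]
    calc |g (cs.wordProd ω * cs.simple i)|
        = |(g (cs.wordProd ω * cs.simple i) - g (cs.wordProd ω)) + g (cs.wordProd ω)| := by
          rw [sub_add_cancel]
      _ ≤ |g (cs.wordProd ω * cs.simple i) - g (cs.wordProd ω)| + |g (cs.wordProd ω)| :=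
          abs_add_le _ _
      _ ≤ b + b * ω.length := add_le_add (h_simple _ _) ih
      _ = b * ↑(ω.length + 1) := by push_cast; ring

variable {R V : Type*} [Semiring R] [AddCommGroup V] [Module R V] (ρ : W →* Module.End R V)

theorem map_mem_of_map_simple_mem {S : Set V} (hS : ∀ i, ∀ v ∈ S, ρ (cs.simple i) v ∈ S)
    (w : W) : ∀ v ∈ S, ρ w v ∈ S := by
  induction w using cs.simple_induction_left with
  | one => simp
  | mul_simple_left w i ih =>
    intro v hv
    rw [map_mul, Module.End.mul_apply]
    exact hS i _ (ih v hv)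

theorem abs_map_sub_le_mul_length {S : Set V} (hS : ∀ i, ∀ v ∈ S, ρ (cs.simple i) v ∈ S)
    {x : V} (hx : ∀ i, ρ (cs.simple i) x - x ∈ S) {f : V →+ ℤ} {b : ℤ}
    (hf : ∀ v ∈ S, |f v| ≤ b) (w : W) :
    |f (ρ w x - x)| ≤ b * cs.length w := by
  refine cs.abs_le_mul_length (g := fun w => f (ρ w x - x)) (by simp) (fun w i => ?_) w
  have h_step : ρ (w * cs.simple i) x - x - (ρ w x - x) = ρ w (ρ (cs.simple i) x - x) := by
    rw [map_mul, Module.End.mul_apply, map_sub]; abel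
  simp only [← map_sub, h_step]
  exact hf _ (cs.map_mem_of_map_simple_mem ρ hS w _ (hx i))

end CoxeterSystem

namespace AffineA2

open Matrix

/-- The affine reflections `s₀, s₁, s₂` of the plane of A₂, in the basis of simple roots with a
third, homogeneous coordinate. Coordinates are scaled by 3, so that the barycenter
`(α₁ + α₂) / 3` of the fundamental alcove becomes the integral point `(1, 1)`. -/
def reflection : Fin 3 → Matrix (Fin 3) (Fin 3) ℤ :=
  ![!![0, -1, 3; -1, 0, 3; 0, 0, 1], !![-1, 1, 0; 0, 1, 0; 0, 0, 1], !![1, 0, 0; 1, -1, 0; 0, 0, 1]]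

theorem isLiftable_reflection : AffineA2.IsLiftable reflection := by
  unfold CoxeterMatrix.IsLiftable; decide

def roots : List (Fin 3 → ℤ) :=
  [![1, 0, 0], ![-1, 0, 0], ![0, 1, 0], ![0, -1, 0], ![1, 1, 0], ![-1, -1, 0]]

theorem reflection_mulVec_mem_roots : ∀ i, ∀ v ∈ roots, reflection i *ᵥ v ∈ roots := by
  decide

def barycenter : Fin 3 → ℤ := ![1, 1, 1]

theorem reflection_mulVec_barycenter_sub_mem_roots :
    ∀ i, reflection i *ᵥ barycenter - barycenter ∈ roots := by
  decide

/-- The coordinate along the axis of the glide reflection `s₁ s₀ s₂`. -/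
def axialCoord : (Fin 3 → ℤ) →+ ℤ :=
  AddMonoidHom.mk' (fun v => 3 * (v 1 - v 0)) fun u v => by simp only [Pi.add_apply]; ring

theorem abs_axialCoord_le_of_mem_roots : ∀ v ∈ roots, |axialCoord v| ≤ 3 := by
  decide

theorem glide_mulVec (v : Fin 3 → ℤ) :
    (reflection 1 * reflection 0 * reflection 2) *ᵥ v = ![-v 1, -v 0 + 3 * v 2, v 2] := by
  rw [show reflection 1 * reflection 0 * reflection 2 = !![0, -1, 0; -1, 0, 3; 0, 0, 1] by decide]
  ext i
  fin_cases i <;> simp [mulVec, dotProduct, Fin.sum_univ_three]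

theorem glide_pow_mulVec_two (k : ℕ) (v : Fin 3 → ℤ) :
    ((reflection 1 * reflection 0 * reflection 2) ^ k *ᵥ v) 2 = v 2 := by
  induction k with
  | zero => simp
  | succ k ih => rw [pow_succ', ← mulVec_mulVec, glide_mulVec]; simpa using ih

theorem axialCoord_glide_pow_mulVec (k : ℕ) (v : Fin 3 → ℤ) :
    axialCoord ((reflection 1 * reflection 0 * reflection 2) ^ k *ᵥ v) =
      axialCoord v + 9 * k * v 2 := by
  induction k with
  | zero => simp
  | succ k ih =>
    have h_two := glide_pow_mulVec_two k v
    rw [pow_succ', ← mulVec_mulVec, glide_mulVec]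
    simp only [axialCoord, AddMonoidHom.mk'_apply] at ih ⊢
    simp only [cons_val_zero, cons_val_one] at *
    push_cast; linarith

variable {W : Type*} [Group W] (cs : CoxeterSystem AffineA2 W)

def affineRep : W →* Module.End ℤ (Fin 3 → ℤ) :=
  (Matrix.toLinAlgEquiv' : Matrix (Fin 3) (Fin 3) ℤ ≃ₐ[ℤ] _).toRingEquiv.toMonoidHom.comp
    (cs.lift ⟨reflection, isLiftable_reflection⟩)

theorem affineRep_apply (w : W) (v : Fin 3 → ℤ) :
    affineRep cs w v = cs.lift ⟨reflection, isLiftable_reflection⟩ w *ᵥ v := by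
  simp [affineRep, Matrix.toLinAlgEquiv'_apply]

theorem affineRep_simple_apply (i : Fin 3) (v : Fin 3 → ℤ) :
    affineRep cs (cs.simple i) v = reflection i *ᵥ v := by
  rw [affineRep_apply, cs.lift_apply_simple]

theorem three_mul_le_length_glide_pow (k : ℕ) :
    3 * k ≤ cs.length ((cs.simple 1 * cs.simple 0 * cs.simple 2) ^ k) := by
  have h_bound := cs.abs_map_sub_le_mul_length (affineRep cs) (S := {v | v ∈ roots})
    (fun i v hv => by simpa [affineRep_simple_apply] using reflection_mulVec_mem_roots i v hv)
    (fun i => by simpa [affineRep_simple_apply] using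
      reflection_mulVec_barycenter_sub_mem_roots i)
    abs_axialCoord_le_of_mem_roots ((cs.simple 1 * cs.simple 0 * cs.simple 2) ^ k)
  have h_shift : axialCoord (affineRep cs ((cs.simple 1 * cs.simple 0 * cs.simple 2) ^ k)
      barycenter - barycenter) = 9 * k := by
    rw [affineRep_apply, map_pow, map_mul, map_mul, cs.lift_apply_simple, cs.lift_apply_simple,
      cs.lift_apply_simple, map_sub, axialCoord_glide_pow_mulVec]
    simp [barycenter, axialCoord]
  rw [h_shift, abs_of_nonneg (by positivity)] at h_bound
  omega

theorem length_glide_pow (k : ℕ) :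
    cs.length ((cs.simple 1 * cs.simple 0 * cs.simple 2) ^ k) = 3 * k := by
  have h_glide : cs.length (cs.simple 1 * cs.simple 0 * cs.simple 2) ≤ 3 := by
    simpa [CoxeterSystem.wordProd, mul_assoc] using cs.length_wordProd_le [1, 0, 2]
  refine le_antisymm ?_ (three_mul_le_length_glide_pow cs k)
  calc _ ≤ k * cs.length (cs.simple 1 * cs.simple 0 * cs.simple 2) := cs.length_pow_le _ k
    _ ≤ 3 * k := by rw [mul_comm 3]; gcongr

end AffineA2

/-- In the affine Coxeter group of type Ã₂ with generators `s₀, s₁, s₂`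
(relations `sᵢ² = 1`, `(sᵢsⱼ)³ = 1` for `i ≠ j`), the element
`w = (s₁ s₀ s₂)^m` has Coxeter length `3m` for every `m ≥ 0`, and consequently
`ℓ(w²) = 2 ℓ(w)`. -/
theorem length_pow_s2s1s3_affineA2 {W : Type*} [Group W]
    (cs : CoxeterSystem AffineA2 W) (m : ℕ) :
    cs.length ((cs.simple 1 * cs.simple 0 * cs.simple 2) ^ m) = 3 * m ∧
    cs.length (((cs.simple 1 * cs.simple 0 * cs.simple 2) ^ m) ^ 2) =
      2 * cs.length ((cs.simple 1 * cs.simple 0 * cs.simple 2) ^ m) := by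
  refine ⟨AffineA2.length_glide_pow cs m, ?_⟩
  rw [← pow_mul, AffineA2.length_glide_pow, AffineA2.length_glide_pow]
  ring
end

section
/- In the affine Coxeter group W of type Ã₂ with generators s₁, s₂, s₃ (relations sᵢ² = 1, (sᵢsⱼ)³ = 1 for i ≠ j), let w = s_{i₁}s_{i₂}⋯s_{i_n} be a word in which consecutive indices satisfy i_k − i_{k+1} ≡ 1 (mod 3) for all k (a 'type 1' word). If ℓ(w²) = 2n, then n is a multiple of 3. -/
namespace List

variable {α : Type*} {l : List α} {p : ℕ}

theorem getElem_add_mul_eq_of_getElem_add_eq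
    (hper : ∀ i (h : i + p < l.length), l[i + p] = l[i]) (m i : ℕ)
    (h : i + p * m < l.length) : l[i + p * m] = l[i]'(by grind) := by
  induction m with
  | zero => simp
  | succ m ih =>
    have hlt : i + p * m + p < l.length := by grind
    calc l[i + p * (m + 1)] = l[i + p * m + p] := by congr 1; ring
      _ = l[i + p * m] := hper _ hlt
      _ = l[i] := ih (by omega)

theorem take_eq_drop_of_getElem_add_eq
    (hper : ∀ i (h : i + p < l.length), l[i + p] = l[i]) {r : ℕ} (hr : r ≤ l.length)
    (hdvd : p ∣ l.length - r) : l.take r = l.drop (l.length - r) := by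
  obtain ⟨m, hm⟩ := hdvd
  refine ext_getElem (by simp only [length_take, length_drop]; omega) fun i _ h₂ => ?_
  simp only [getElem_take, getElem_drop, hm, add_comm _ i]
  exact (getElem_add_mul_eq_of_getElem_add_eq hper m i (by simp only [length_drop] at h₂; omega)).symm

end List

namespace CoxeterSystem

variable {B W : Type*} [Group W] {M : CoxeterMatrix B} (cs : CoxeterSystem M W)

theorem length_wordProd_append_append_le (α β γ : List B) :
    cs.length (cs.wordProd (α ++ β ++ γ)) ≤ α.length + cs.length (cs.wordProd β) + γ.length := by
  rw [cs.wordProd_append, cs.wordProd_append]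
  grw [cs.length_mul_le, cs.length_mul_le, cs.length_wordProd_le α, cs.length_wordProd_le γ]

theorem wordProd_pair_self (i : B) : cs.wordProd [i, i] = 1 := by
  simp [cs.wordProd_cons]

theorem wordProd_alternating_four_of_eq_three {i j : B} (h : M i j = 3) :
    cs.wordProd [i, j, i, j] = cs.wordProd [j, i] := by
  have hbraid := cs.wordProd_braidWord_eq j i
  rw [braidWord, braidWord, M.symmetric, h] at hbraid
  simp only [alternatingWord, List.concat_eq_append, List.nil_append, List.cons_append,
    cs.wordProd_cons, cs.wordProd_nil, mul_one] at hbraid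
  simp only [cs.wordProd_cons, cs.wordProd_nil, mul_one, ← hbraid, ← mul_assoc,
    cs.simple_mul_simple_self, one_mul]

theorem length_sq_wordProd_le_of_take_eq_drop (ω : List B) {r : ℕ}
    (h : ω.take r = ω.drop (ω.length - r)) :
    cs.length (cs.wordProd ω ^ 2) ≤
      2 * (ω.length - r) + cs.length (cs.wordProd (ω.take r ++ ω.take r)) := by
  have hsuffix : ω.take (ω.length - r) ++ ω.take r = ω := by rw [h, List.take_append_drop]
  have hsplit : ω ++ ω = ω.take (ω.length - r) ++ (ω.take r ++ ω.take r) ++ ω.drop r := by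
    rw [List.append_assoc, List.append_assoc, List.take_append_drop, ← List.append_assoc,
      hsuffix]
  rw [sq, ← cs.wordProd_append, hsplit]
  grw [cs.length_wordProd_append_append_le]
  simp only [List.length_take, List.length_drop]
  omega

end CoxeterSystem

section AffineA2

variable {W : Type*} [Group W] (cs : CoxeterSystem AffineA2 W)

theorem getElem_add_three_of_isChain_sub_one {l : List (Fin 3)}
    (hl : l.IsChain (fun a b => b = a - 1)) (i : ℕ) (h : i + 3 < l.length) :
    l[i + 3] = l[i] := by
  rw [hl.getElem (i + 2) h, hl.getElem (i + 1) (by omega), hl.getElem i (by omega)]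
  generalize l[i] = a
  revert a
  decide

theorem length_wordProd_append_self_lt_of_isChain_sub_one {T : List (Fin 3)}
    (hT : T.IsChain (fun a b => b = a - 1)) (hpos : 0 < T.length) (hlt : T.length < 3) :
    cs.length (cs.wordProd (T ++ T)) < 2 * T.length := by
  match T, hT with
  | [a], _ => simp [cs.wordProd_pair_self]
  | [a, b], hT =>
    obtain rfl : b = a - 1 := by simpa using hT
    have hne : a ≠ a - 1 := by revert a; decide
    have h3 : AffineA2.M a (a - 1) = 3 := by simp [AffineA2, hne]
    rw [List.cons_append, List.cons_append, List.nil_append,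
      cs.wordProd_alternating_four_of_eq_three h3]
    exact (cs.length_wordProd_le [a - 1, a]).trans_lt (by simp)

end AffineA2

/-- In the affine Coxeter group of type Ã₂, let `w = s_{i₁} ⋯ s_{i_n}` be a
"type 1" word: consecutive indices satisfy `i_{k+1} = i_k - 1 (mod 3)`.
If `ℓ(w²) = 2n`, then `n` is a multiple of `3`. -/
theorem type_one_word_length_sq_imp_three_dvd {W : Type*} [Group W]
    (cs : CoxeterSystem AffineA2 W) (n : ℕ) (f : Fin n → Fin 3)
    (hstep : ∀ (k : ℕ) (h : k + 1 < n),
      f ⟨k + 1, h⟩ = f ⟨k, Nat.lt_of_succ_lt h⟩ - 1)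
    (hlen : cs.length ((cs.wordProd (List.ofFn f)) ^ 2) = 2 * n) :
    3 ∣ n := by
  set ω := List.ofFn f
  have hω : ω.length = n := List.length_ofFn
  have hchain : ω.IsChain (fun a b => b = a - 1) := List.isChain_ofFn.2 hstep
  by_contra hdvd
  have hr : (ω.take (n % 3)).length = n % 3 := List.length_take_of_le (by omega)
  have hperiod : ω.take (n % 3) = ω.drop (ω.length - n % 3) :=
    List.take_eq_drop_of_getElem_add_eq (getElem_add_three_of_isChain_sub_one hchain)
      (by omega) (by omega)
  have hsq := cs.length_sq_wordProd_le_of_take_eq_drop ω hperiod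
  have hjunction := length_wordProd_append_self_lt_of_isChain_sub_one cs (hchain.take (n % 3))
    (by omega) (by omega)
  omega
end

section
/- Let F be a nonarchimedean local field with ring of integers O_F, uniformizer π, residue field of size q. Let L = F(λ) be a ramified quadratic extension, with λ a uniformizer of L having minimal polynomial x² − bx − c over F (so ord_π(c) = 1), and embed L^× into GL₂(F) as the matrices [[u, vc],[v, u+vb]] (u,v ∈ F, not both 0). Let U_L = L^× ∩ GL₂(O_F) be the unit group. Then for every m ≥ 1, the double coset U_L · diag(1, π^m) · GL₂(O_F) decomposes into exactly q^m left GL₂(O_F)-cosets. -/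
/-!
The matrix `[[u, vc], [v, u + vb]]` is multiplication by `u + vλ` on `L = F ⊕ Fλ`. Since
`b, c ∈ πO_F`, its determinant `u² + buv − cv²` is congruent to `u²` modulo `π`, so it lies in
`GL₂(O_F)` exactly when `u` is a unit, and then `u + vλ = u(1 + tλ)` with `t = v/u ∈ O_F`.
Conjugating by `diag(1, π^m)` turns `λ` into `π^m λ`, so `(u + vλ)⁻¹(u' + v'λ)` lies in
`diag(1, π^m) GL₂(O_F) diag(1, π^m)⁻¹` exactly when `π^m ∣ uv' − vu'`. Hence the cosets are
those of `(1 + tλ) diag(1, π^m)`, indexed by `t ∈ O_F / π^m`, a set of `q^m` elements.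
-/

open Matrix

noncomputable section

variable {F : Type*} [Field F]

/-- `GL₂(O_F)`: the set of `2×2` matrices with entries in `R` invertible over `R`. -/
def Kint2 (R : Subring F) : Set (Matrix (Fin 2) (Fin 2) F) :=
  {g | (∀ i j, g i j ∈ R) ∧ ∃ h : Matrix (Fin 2) (Fin 2) F,
    (∀ i j, h i j ∈ R) ∧ g * h = 1 ∧ h * g = 1}

theorem Submonoid.setOf_mul_eq_setOf_mul_iff {M : Type*} [Monoid M] {K : Submonoid M}
    (hK : ∀ k ∈ K, ∃ k' ∈ K, k * k' = 1) (g g' : M) :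
    {x | ∃ k ∈ K, x = g * k} = {x | ∃ k ∈ K, x = g' * k} ↔ ∃ k ∈ K, g' = g * k := by
  constructor
  · intro h
    have hg' : g' ∈ {x | ∃ k ∈ K, x = g' * k} := ⟨1, K.one_mem, (mul_one g').symm⟩
    rwa [← h] at hg'
  · rintro ⟨k, hk, rfl⟩
    obtain ⟨k', hk', hkk'⟩ := hK k hk
    ext x
    constructor
    · rintro ⟨l, hl, rfl⟩
      exact ⟨k' * l, K.mul_mem hk' hl, by rw [← mul_assoc, mul_assoc g, hkk', mul_one]⟩
    · rintro ⟨l, hl, rfl⟩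
      exact ⟨k * l, K.mul_mem hk hl, by rw [mul_assoc]⟩

theorem Ideal.card_quot_pow_of_isPrincipal {R : Type*} [CommRing R] [IsDomain R] {I : Ideal R}
    (hI : I.IsPrincipal) (hI0 : I ≠ ⊥) (n : ℕ) :
    Nat.card (R ⧸ I ^ n) = Nat.card (R ⧸ I) ^ n := by
  induction n with
  | zero => simp
  | succ n ih =>
    rw [← Submodule.card_quotient_mul_card_quotient (I ^ n) (I ^ (n + 1))
      (Ideal.pow_le_pow_right n.le_succ), ih, pow_succ (Nat.card (R ⧸ I)), mul_comm]
    congr 1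
    refine Nat.card_congr <| (Equiv.subtypeEquivRight fun x => ?_).trans
      ((Ideal.quotEquivPowQuotPowSuccEquiv hI hI0 n).trans
        (Ideal.powQuotPowSuccEquivMapMkPowSuccPow I n)).symm
    rw [Ideal.mem_map_iff_of_surjective _ Ideal.Quotient.mk_surjective, Submodule.mem_map]
    rfl

theorem Nat.card_eq_card_quotient_of_surjective {R β : Type*} [CommRing R] (I : Ideal R)
    (f : R → β) (hf : Function.Surjective f) (hfib : ∀ x y, f x = f y ↔ x - y ∈ I) :
    Nat.card β = Nat.card (R ⧸ I) :=
  Nat.card_congr <| (Setoid.quotientKerEquivOfSurjective f hf).symm.trans <|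
    Quotient.congrRight fun x y => (hfib x y).trans (Submodule.quotientRel_def I).symm

theorem Subring.dvd_iff_exists_mem {A : Type*} [CommRing A] {R : Subring A} {x y : R} :
    y ∣ x ↔ ∃ w ∈ R, (x : A) = y * w :=
  ⟨fun ⟨w, h⟩ => ⟨w, w.2, by rw [h, Subring.coe_mul]⟩,
    fun ⟨w, hw, h⟩ => ⟨⟨w, hw⟩, Subtype.ext h⟩⟩

theorem Subring.det_mem {A n : Type*} [CommRing A] [Fintype n] [DecidableEq n] {R : Subring A}
    {g : Matrix n n A} (hg : ∀ i j, g i j ∈ R) : g.det ∈ R := by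
  rw [det_apply]
  exact R.sum_mem fun σ _ => by
    rw [Units.smul_def]
    exact R.zsmul_mem (R.prod_mem fun i _ => hg _ _) _

namespace Kint2

variable {R : Subring F}

theorem mem_iff {g : Matrix (Fin 2) (Fin 2) F} :
    g ∈ Kint2 R ↔ (∀ i j, g i j ∈ R) ∧ ∃ e ∈ R, g.det * e = 1 := by
  refine and_congr_right fun hg => ⟨?_, ?_⟩
  · rintro ⟨h, hh, hgh, -⟩
    exact ⟨h.det, Subring.det_mem hh, by rw [← det_mul, hgh, det_one]⟩
  · rintro ⟨e, he, hge⟩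
    refine ⟨e • g.adjugate, fun i j => ?_, ?_, ?_⟩
    · rw [Matrix.smul_apply, smul_eq_mul, adjugate_fin_two]
      fin_cases i <;> fin_cases j
      all_goals simp only [Fin.zero_eta, Fin.mk_one, of_apply, cons_val', cons_val_zero,
        cons_val_one, empty_val', cons_val_fin_one]
      all_goals first
        | exact R.mul_mem he (hg _ _)
        | exact R.mul_mem he (R.neg_mem (hg _ _))
    · rw [mul_smul_comm, mul_adjugate, smul_smul, mul_comm, hge, one_smul]
    · rw [smul_mul_assoc, adjugate_mul, smul_smul, mul_comm, hge, one_smul]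

variable (R) in
def submonoid : Submonoid (Matrix (Fin 2) (Fin 2) F) where
  carrier := Kint2 R
  one_mem' := mem_iff.2 ⟨fun i j => by
      fin_cases i <;> fin_cases j <;> simp [R.one_mem, R.zero_mem],
    1, R.one_mem, by simp⟩
  mul_mem' := by
    rintro g g' ⟨hg, h, hh, hgh, hhg⟩ ⟨hg', h', hh', hgh', hhg'⟩
    have mul_apply_mem {a a' : Matrix (Fin 2) (Fin 2) F} (ha : ∀ i j, a i j ∈ R)
        (ha' : ∀ i j, a' i j ∈ R) (i j : Fin 2) : (a * a') i j ∈ R := by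
      rw [mul_apply, Fin.sum_univ_two]
      exact R.add_mem (R.mul_mem (ha _ _) (ha' _ _)) (R.mul_mem (ha _ _) (ha' _ _))
    refine ⟨mul_apply_mem hg hg', h' * h, mul_apply_mem hh' hh, ?_, ?_⟩
    · rw [mul_assoc, ← mul_assoc g', hgh', one_mul, hgh]
    · rw [mul_assoc, ← mul_assoc h, hhg, one_mul, hhg']

theorem exists_mul_eq_one {k : Matrix (Fin 2) (Fin 2) F} (hk : k ∈ Kint2 R) :
    ∃ k' ∈ Kint2 R, k * k' = 1 := by
  obtain ⟨hk, h, hh, hkh, hhk⟩ := hk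
  exact ⟨h, ⟨hh, k, hk, hhk, hkh⟩, hkh⟩

end Kint2

/-- The matrix of multiplication by `u + vλ` in the basis `(1, λ)`, where `λ² = bλ + c`. -/
def mulMatrix (b c u v : F) : Matrix (Fin 2) (Fin 2) F := !![u, v * c; v, u + v * b]

theorem mulMatrix_mul (b c u v u' v' : F) :
    mulMatrix b c u v * mulMatrix b c u' v' =
      mulMatrix b c (u * u' + c * v * v') (u * v' + v * u' + b * v * v') := by
  ext i j
  fin_cases i <;> fin_cases j <;>
    simp only [mulMatrix, mul_fin_two, Fin.zero_eta, Fin.mk_one, of_apply, cons_val',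
      cons_val_zero, cons_val_one, empty_val', cons_val_fin_one] <;> ring

theorem det_mulMatrix (b c u v : F) :
    (mulMatrix b c u v).det = u ^ 2 + b * u * v - c * v ^ 2 := by
  rw [mulMatrix, det_fin_two_of]
  ring

/-- Conjugation by `diag(1, t)` is the change of basis from `(1, λ)` to `(1, tλ)`. -/
theorem mulMatrix_mul_diagonal (b c u v t : F) :
    mulMatrix b c u (t * v) * diagonal ![1, t] =
      diagonal ![1, t] * mulMatrix (t * b) (t ^ 2 * c) u v := by
  ext i j
  fin_cases i <;> fin_cases j <;>
    simp only [mulMatrix, diagonal_fin_two, mul_fin_two, Fin.zero_eta, Fin.mk_one, of_apply,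
      cons_val', cons_val_zero, cons_val_one, empty_val', cons_val_fin_one] <;> ring

section Integral

variable {R : Subring F} {b c u v u' v' : F}

theorem mulMatrix_apply_mem (hb : b ∈ R) (hc : c ∈ R) (hu : u ∈ R) (hv : v ∈ R) (i j : Fin 2) :
    mulMatrix b c u v i j ∈ R := by
  fin_cases i <;> fin_cases j
  exacts [hu, R.mul_mem hv hc, hv, R.add_mem hu (R.mul_mem hv hb)]

theorem mulMatrix_mem_Kint2_iff (hb : b ∈ R) (hc : c ∈ R) (hu : u ∈ R) (hv : v ∈ R) :
    mulMatrix b c u v ∈ Kint2 R ↔ ∃ e ∈ R, (mulMatrix b c u v).det * e = 1 := by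
  rw [Kint2.mem_iff, and_iff_right (mulMatrix_apply_mem hb hc hu hv)]

variable {π : F} {m : ℕ}

theorem exists_sub_eq_pow_mul_of_mul_diagonal_eq (hb : b ∈ R) (hc : c ∈ R) (hu : u ∈ R)
    (hv : v ∈ R) {k : Matrix (Fin 2) (Fin 2) F} (hk : k 1 0 ∈ R)
    (h : mulMatrix b c u' v' * diagonal ![1, π ^ m] =
      mulMatrix b c u v * diagonal ![1, π ^ m] * k) :
    ∃ w ∈ R, u * v' - v * u' = π ^ m * w := by
  refine ⟨k 1 0 * (mulMatrix b c u v).det,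
    R.mul_mem hk (Subring.det_mem (mulMatrix_apply_mem hb hc hu hv)), ?_⟩
  have h00 := congrFun (congrFun h 0) 0
  have h10 := congrFun (congrFun h 1) 0
  simp only [mulMatrix, diagonal_fin_two, mul_fin_two, mul_apply, Fin.sum_univ_two, of_apply,
    cons_val', cons_val_zero, cons_val_one, empty_val', cons_val_fin_one] at h00 h10
  rw [det_mulMatrix]
  linear_combination u * h10 - v * h00

theorem exists_mem_Kint2_of_sub_eq_pow_mul (hπ : π ∈ R) (hb : b ∈ R) (hc : c ∈ R) (hu : u ∈ R)
    (hv : v ∈ R) (hu' : u' ∈ R) (hv' : v' ∈ R) (hg : mulMatrix b c u v ∈ Kint2 R)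
    (hg' : mulMatrix b c u' v' ∈ Kint2 R) {w : F} (hw : w ∈ R)
    (hrel : u * v' - v * u' = π ^ m * w) :
    ∃ k ∈ Kint2 R, mulMatrix b c u' v' * diagonal ![1, π ^ m] =
      mulMatrix b c u v * diagonal ![1, π ^ m] * k := by
  obtain ⟨e, he, hNe⟩ := (mulMatrix_mem_Kint2_iff hb hc hu hv).1 hg
  obtain ⟨e', he', hN'e'⟩ := (mulMatrix_mem_Kint2_iff hb hc hu' hv').1 hg'
  -- `(u' + v'λ) / (u + vλ) = e (u + vb − vλ)(u' + v'λ)`, whose `λ`-coordinate is `π^m e w`.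
  set x := e * ((u + v * b) * u' - c * v * v')
  have hx : x ∈ R := R.mul_mem he (R.sub_mem (R.mul_mem (R.add_mem hu (R.mul_mem hv hb)) hu')
    (R.mul_mem (R.mul_mem hc hv) hv'))
  have hquot : mulMatrix b c u v * mulMatrix b c x (π ^ m * (e * w)) = mulMatrix b c u' v' := by
    rw [det_mulMatrix] at hNe
    rw [mulMatrix_mul]
    congr 1
    · linear_combination u' * hNe - c * v * e * hrel
    · linear_combination v' * hNe - e * (u + b * v) * hrel
  have hdet := congrArg det hquot
  rw [det_mul] at hdet
  have hπm : π ^ m ∈ R := pow_mem hπ m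
  refine ⟨mulMatrix (π ^ m * b) ((π ^ m) ^ 2 * c) x (e * w),
    (mulMatrix_mem_Kint2_iff (R.mul_mem hπm hb) (R.mul_mem (pow_mem hπm 2) hc) hx
      (R.mul_mem he hw)).2 ⟨(mulMatrix b c u v).det * e', R.mul_mem (Subring.det_mem
        (mulMatrix_apply_mem hb hc hu hv)) he', ?_⟩, ?_⟩
  · simp only [det_mulMatrix] at hdet hN'e' ⊢
    linear_combination e' * hdet + hN'e'
  · rw [mul_assoc, ← mulMatrix_mul_diagonal, ← mul_assoc, hquot]

theorem setOf_mulMatrix_mul_diagonal_eq_iff (hπ : π ∈ R) (hb : b ∈ R) (hc : c ∈ R) (hu : u ∈ R)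
    (hv : v ∈ R) (hu' : u' ∈ R) (hv' : v' ∈ R) (hg : mulMatrix b c u v ∈ Kint2 R)
    (hg' : mulMatrix b c u' v' ∈ Kint2 R) :
    {x | ∃ k ∈ Kint2 R, x = mulMatrix b c u v * diagonal ![1, π ^ m] * k} =
        {x | ∃ k ∈ Kint2 R, x = mulMatrix b c u' v' * diagonal ![1, π ^ m] * k} ↔
      ∃ w ∈ R, u * v' - v * u' = π ^ m * w :=
  (Submonoid.setOf_mul_eq_setOf_mul_iff (K := Kint2.submonoid R)
    (fun _ => Kint2.exists_mul_eq_one) _ _).trans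
    ⟨fun ⟨_, hk, h⟩ => exists_sub_eq_pow_mul_of_mul_diagonal_eq hb hc hu hv (hk.1 1 0) h,
      fun ⟨_, hw, hrel⟩ =>
        exists_mem_Kint2_of_sub_eq_pow_mul hπ hb hc hu hv hu' hv' hg hg' hw hrel⟩

end Integral

section Units

variable {R : Subring F} {π : F}

theorem exists_mul_eq_one_of_sub_eq_mul (hπ : ¬∃ y ∈ R, π * y = 1)
    (hmax : ∀ x ∈ R, (∃ y ∈ R, x * y = 1) ∨ ∃ y ∈ R, x = π * y) {x y z : F}
    (hy : y ∈ R) (hz : z ∈ R) (hxy : x - y = π * z) (hx : ∃ e ∈ R, x * e = 1) :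
    ∃ e ∈ R, y * e = 1 := by
  obtain ⟨e, he, hxe⟩ := hx
  refine (hmax y hy).resolve_right ?_
  rintro ⟨y', hy', rfl⟩
  exact hπ ⟨(z + y') * e, R.mul_mem (R.add_mem hz hy') he, by linear_combination hxe - e * hxy⟩

theorem mulMatrix_mem_Kint2_iff_exists_mul_eq_one (hπR : π ∈ R) (hπ : ¬∃ y ∈ R, π * y = 1)
    (hmax : ∀ x ∈ R, (∃ y ∈ R, x * y = 1) ∨ ∃ y ∈ R, x = π * y) {b c u v : F}
    (hb : ∃ y ∈ R, b = π * y) (hc : ∃ y ∈ R, c = π * y) (hu : u ∈ R) (hv : v ∈ R) :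
    mulMatrix b c u v ∈ Kint2 R ↔ ∃ e ∈ R, u * e = 1 := by
  obtain ⟨β, hβ, rfl⟩ := hb
  obtain ⟨γ, hγ, rfl⟩ := hc
  have hbR := R.mul_mem hπR hβ
  have hcR := R.mul_mem hπR hγ
  have hN := Subring.det_mem (mulMatrix_apply_mem hbR hcR hu hv)
  rw [mulMatrix_mem_Kint2_iff hbR hcR hu hv]
  rw [det_mulMatrix] at hN ⊢
  have hz : β * u * v - γ * v ^ 2 ∈ R :=
    R.sub_mem (R.mul_mem (R.mul_mem hβ hu) hv) (R.mul_mem hγ (pow_mem hv 2))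
  have hsq : (∃ e ∈ R, u ^ 2 * e = 1) ↔ ∃ e ∈ R, u * e = 1 :=
    ⟨fun ⟨e, he, h⟩ => ⟨u * e, R.mul_mem hu he, by linear_combination h⟩,
      fun ⟨e, he, h⟩ => ⟨e ^ 2, pow_mem he 2, by linear_combination (u * e + 1) * h⟩⟩
  rw [← hsq]
  exact ⟨exists_mul_eq_one_of_sub_eq_mul hπ hmax (pow_mem hu 2) hz (by ring),
    exists_mul_eq_one_of_sub_eq_mul hπ hmax hN (R.neg_mem hz) (by ring)⟩

end Units

theorem ramified_double_coset_count_general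
    (R : Subring F) (π : F) (q : ℕ)
    (hπR : π ∈ R) (hπ0 : π ≠ 0) (hπnotunit : ¬∃ y ∈ R, π * y = 1)
    (hmax : ∀ x ∈ R, (∃ y ∈ R, x * y = 1) ∨ (∃ y ∈ R, x = π * y))
    (hq : Nat.card (R ⧸ Ideal.span {(⟨π, hπR⟩ : R)}) = q)
    (b c : F)
    (hb : ∃ y ∈ R, b = π * y)
    (hc : ∃ u ∈ R, (∃ u' ∈ R, u * u' = 1) ∧ c = π * u)
    (m : ℕ) :
    Nat.card {s : Set (Matrix (Fin 2) (Fin 2) F) //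
      ∃ u v : F, u ∈ R ∧ v ∈ R ∧
        (!![u, v * c; v, u + v * b]) ∈ Kint2 R ∧
        s = {x | ∃ k ∈ Kint2 R,
          x = !![u, v * c; v, u + v * b] * Matrix.diagonal ![1, π ^ m] * k}} =
      q ^ m := by
  obtain ⟨γ, hγ, -, hcγ⟩ := hc
  have hbR : b ∈ R := by obtain ⟨β, hβ, rfl⟩ := hb; exact R.mul_mem hπR hβ
  have hcR : c ∈ R := hcγ ▸ R.mul_mem hπR hγ
  have hunit {u v : F} (hu : u ∈ R) (hv : v ∈ R) :=
    mulMatrix_mem_Kint2_iff_exists_mul_eq_one hπR hπnotunit hmax hb ⟨γ, hγ, hcγ⟩ hu hv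
  have hK (t : R) : mulMatrix b c 1 t ∈ Kint2 R :=
    (hunit R.one_mem t.2).2 ⟨1, R.one_mem, one_mul 1⟩
  have hcoset {u v u' v' : F} (hu : u ∈ R) (hv : v ∈ R) (hu' : u' ∈ R) (hv' : v' ∈ R) :=
    setOf_mulMatrix_mul_diagonal_eq_iff (m := m) hπR hbR hcR hu hv hu' hv'
  rw [← hq, ← Ideal.card_quot_pow_of_isPrincipal ⟨_, rfl⟩ (by simpa using hπ0) m,
    Ideal.span_singleton_pow]
  refine Nat.card_eq_card_quotient_of_surjective _
    (fun t : R => ⟨_, 1, t, R.one_mem, t.2, hK t, rfl⟩) ?_ fun t t' => ?_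
  · rintro ⟨s, u, v, hu, hv, hg, rfl⟩
    obtain ⟨y, hy, huy⟩ := (hunit hu hv).1 hg
    refine ⟨⟨v * y, R.mul_mem hv hy⟩, Subtype.ext ?_⟩
    exact (hcoset R.one_mem (R.mul_mem hv hy) hu hv (hK ⟨v * y, R.mul_mem hv hy⟩) hg).2
      ⟨0, R.zero_mem, by linear_combination -v * huy⟩
  · rw [Subtype.mk.injEq, eq_comm]
    refine (hcoset R.one_mem t'.2 R.one_mem t.2 (hK t') (hK t)).trans ?_
    rw [Ideal.mem_span_singleton, Subring.dvd_iff_exists_mem]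
    simp only [one_mul, mul_one, AddSubgroupClass.coe_sub, SubmonoidClass.coe_pow]

/-- Let `F` be a nonarchimedean local field with valuation ring `R`, uniformizer `π`
and residue field of size `q`.  Let `L = F(λ)` be a ramified quadratic extension,
`λ` a uniformizer of `L` with minimal polynomial `x² − bx − c` (so `ord_π c = 1`,
`ord_π b ≥ 1`), with `L^×` embedded in `GL₂(F)` as the matrices `[[u,vc],[v,u+vb]]`
and `U_L = L^× ∩ GL₂(O_F)`.  Then for every `m ≥ 1`, the double coset
`U_L · diag(1, π^m) · GL₂(O_F)` is a union of exactly `q^m` left `GL₂(O_F)`-cosets. -/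
theorem ramified_double_coset_count
    (R : Subring F) (π : F) (q : ℕ)
    (hval : ∀ x : F, x ∈ R ∨ (x ≠ 0 ∧ x⁻¹ ∈ R))
    (hπR : π ∈ R) (hπ0 : π ≠ 0) (hπnotunit : ¬∃ y ∈ R, π * y = 1)
    (hmax : ∀ x ∈ R, (∃ y ∈ R, x * y = 1) ∨ (∃ y ∈ R, x = π * y))
    (hq : Nat.card (R ⧸ Ideal.span {(⟨π, hπR⟩ : R)}) = q) (hq2 : 2 ≤ q)
    (b c : F)
    (hb : ∃ y ∈ R, b = π * y)
    (hc : ∃ u ∈ R, (∃ u' ∈ R, u * u' = 1) ∧ c = π * u)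
    (hirr : ∀ x : F, x ^ 2 - b * x - c ≠ 0)
    (m : ℕ) (hm : 1 ≤ m) :
    Nat.card {s : Set (Matrix (Fin 2) (Fin 2) F) //
      ∃ u v : F, u ∈ R ∧ v ∈ R ∧
        (!![u, v * c; v, u + v * b]) ∈ Kint2 R ∧
        s = {x | ∃ k ∈ Kint2 R,
          x = !![u, v * c; v, u + v * b] * Matrix.diagonal ![1, π ^ m] * k}} =
      q ^ m :=
  ramified_double_coset_count_general R π q hπR hπ0 hπnotunit hmax hq b c hb hc m

end
end
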